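/- arXiv:2112.12134 — 4 statements merged into one kernel-verified Lean document; each statement's English description precedes it below -/
import Mathlib

section
/- Dynamic regret for S-I: Let E be a real normed vector space, φ: [0,∞) → [0,+∞] convex with φ(0) = 0, and ψ: E → ℝ ∪ {+∞} proper and φ-convex. Fix T ≥ 1, a ∈ E, a^ψ ∈ ∂ψ(a), positive reals η_1,…,η_{T+1} and θ_1,…,θ_T, and vectors x̂_1*,…,x̂_T* ∈ E*. Suppose that for each t = 1,…,T+1 we set x̌_t^ψ = a^ψ − η_t Σ_{i=1}^{t−1} θ_i x_i*, and for t = 1,…,T there are points x̃_t, x_t ∈ E and x̃_t^ψ ∈ E* with: x̌_t^ψ ∈ ∂ψ(x̃_t), x̃_t^ψ ∈ ∂ψ(x̃_t), and x̃_t^ψ − η_t θ_t x̂_t* ∈ ∂ψ(x_t); suppose f_t: E → ℝ ∪ {+∞} satisfies x_t* ∈ ∂f_t(x_t); and suppose there exists X_{t+1} ∈ E with (1/η_{t+1})(x̌_{t+1}^ψ − a^ψ) ∈ ∂ψ̃_t(X_{t+1}), where ψ̃_t(x) = (1/η_t)(ψ(x) − ⟨a^ψ, x⟩). Then for all z_1,…,z_T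 ∈ dom ψ with f_t(z_t) < +∞: Σ_{t=1}^T (f_t(x_t) − f_t(z_t)) ≤ Σ_{t=1}^T (1/(η_tθ_t))[B_ψ(z_t, x̌_t^ψ) − B_ψ(z_t, a^ψ + (η_t/η_{t+1})(x̌_{t+1}^ψ − a^ψ))] + Σ_{t=1}^T (1/(η_tθ_t))[B_ψ(X_{t+1}, x̃_t^ψ) − B_ψ(X_{t+1}, x̌_t^ψ)] + Σ_{t=1}^T (1/(η_tθ_t)) φ*(η_tθ_t‖x_t* − x̂_t*‖) − Σ_{t=1}^T (1/(η_tθ_t)) B_ψ(x_t, x̃_t^ψ). -/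
/-!
Fix a round `t` and put `c = η_t θ_t`. The rescaled next dual iterate
`a^ψ + (η_t / η_{t+1}) (x̌_{t+1}^ψ − a^ψ)` equals `q = x̌_t^ψ − c x_t*`, and the subgradient
condition for `ψ̃_t` at `X_{t+1}` says exactly `q ∈ ∂ψ(X_{t+1})`. Hence every Bregman term of the
round is a real number given by `B_ψ(w, p) = ψ(w) − ψ(y) − ⟨p, w − y⟩` for `p ∈ ∂ψ(y)`, and the
first two brackets add up to `B_ψ(X_{t+1}, x̃_t^ψ) + c⟨x_t*, X_{t+1} − z_t⟩`. φ-convexity of `ψ`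
at `x_t`, whose subgradient is `x̃_t^ψ − c x̂_t*`, bounds
`B_ψ(x_t, x̃_t^ψ) − B_ψ(X_{t+1}, x̃_t^ψ)` by `c⟨x̂_t*, X_{t+1} − x_t⟩ − φ(‖X_{t+1} − x_t‖)`, and the
Fenchel–Young inequality for `φ` turns `c⟨x_t* − x̂_t*, x_t − X_{t+1}⟩ − φ(‖X_{t+1} − x_t‖)` into
`φ*(c‖x_t* − x̂_t*‖)`. Together with `f_t(x_t) − f_t(z_t) ≤ ⟨x_t*, x_t − z_t⟩` this bounds the
regret of the round; since all terms except the `φ*` ones are finite, the rounds add up.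
-/

open Finset

/-- Fenchel conjugate of an extended-real-valued function on a normed space. -/
noncomputable def fconj {E : Type*} [NormedAddCommGroup E] [NormedSpace ℝ E]
    (g : E → EReal) (p : E →L[ℝ] ℝ) : EReal :=
  ⨆ x : E, ((p x : ℝ) : EReal) - g x

/-- Generalized Bregman divergence `B_g(x, y*) = g(x) + g*(y*) − ⟨y*, x⟩`. -/
noncomputable def breg {E : Type*} [NormedAddCommGroup E] [NormedSpace ℝ E]
    (g : E → EReal) (x : E) (p : E →L[ℝ] ℝ) : EReal :=
  g x + fconj g p - ((p x : ℝ) : EReal)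

/-- Subdifferential: `∂g(x) = {x* : B_g(x, x*) = 0}`. -/
def subdiff {E : Type*} [NormedAddCommGroup E] [NormedSpace ℝ E]
    (g : E → EReal) (x : E) : Set (E →L[ℝ] ℝ) :=
  {p | breg g x p = 0}

/-- Conjugate of `Φ : [0,∞) → [0,+∞]` : `Φ*(s) = sup_{r ≥ 0} (s·r − Φ(r))`. -/
noncomputable def phiConj (Φ : ℝ → EReal) (s : ℝ) : EReal :=
  ⨆ r : {r : ℝ // 0 ≤ r}, ((s * r.1 : ℝ) : EReal) - Φ r.1



namespace EReal

@[norm_cast]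
theorem coe_finset_sum {ι : Type*} (s : Finset ι) (f : ι → ℝ) :
    ((∑ i ∈ s, f i : ℝ) : EReal) = ∑ i ∈ s, (f i : EReal) :=
  map_sum (⟨⟨((↑) : ℝ → EReal), coe_zero⟩, coe_add⟩ : ℝ →+ EReal) f s

theorem coe_sub_le_coe_iff (a c : ℝ) (w : EReal) :
    (a : EReal) - w ≤ c ↔ ((a - c : ℝ) : EReal) ≤ w := by
  induction w using EReal.rec with
  | bot => simp [-coe_sub]
  | coe w => norm_cast; constructor <;> intro h <;> linarith
  | top => simp

theorem coe_le_add_add_sub_coe_iff (x y z u : ℝ) (w : EReal) :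
    (x : EReal) ≤ y + z + w - u ↔ ((x - y - z + u : ℝ) : EReal) ≤ w := by
  induction w using EReal.rec with
  | bot => simp [← coe_add, -coe_sub]
  | coe w => norm_cast; constructor <;> intro h <;> linarith
  | top => simp [← coe_add]

theorem coe_le_one_div_mul_sub_coe_iff {η : ℝ} (hη : 0 < η) (u b : ℝ) (w : EReal) :
    (u : EReal) ≤ ((1 / η : ℝ) : EReal) * (w - b) ↔ ((b + η * u : ℝ) : EReal) ≤ w := by
  induction w using EReal.rec with
  | bot => rw [bot_sub, coe_mul_bot_of_pos (one_div_pos.2 hη)]; simp [-coe_add, -coe_mul]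
  | coe w =>
    norm_cast
    rw [one_div_mul_eq_div, le_div_iff₀ hη]
    constructor <;> intro h <;> linarith
  | top => rw [top_sub_coe, coe_mul_top_of_pos (one_div_pos.2 hη)]; simp [-coe_add, -coe_mul]

theorem one_div_mul_sub_coe_eq_coe_iff {η : ℝ} (hη : 0 < η) (u b : ℝ) (w : EReal) :
    ((1 / η : ℝ) : EReal) * (w - b) = u ↔ w = ((b + η * u : ℝ) : EReal) := by
  induction w using EReal.rec with
  | bot => rw [bot_sub, coe_mul_bot_of_pos (one_div_pos.2 hη)]; simp [-coe_add, -coe_mul]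
  | coe w =>
    norm_cast
    rw [one_div_mul_eq_div, _root_.div_eq_iff hη.ne']
    constructor <;> intro h <;> linarith
  | top => rw [top_sub_coe, coe_mul_top_of_pos (one_div_pos.2 hη)]; simp [-coe_add, -coe_mul]

theorem exists_coe_of_add_sub_coe_eq_zero {A B : EReal} {c : ℝ} (h : A + B - c = 0) :
    ∃ a b : ℝ, A = a ∧ B = b ∧ a + b = c := by
  induction A using EReal.rec <;> induction B using EReal.rec <;>
    simp_all [← coe_add, ← coe_sub, sub_eq_zero]

theorem sum_coe_le_sum_add_sum_add_sum_sub_sum {ι : Type*} {s : Finset ι} {a b c d : ι → ℝ}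
    {w : ι → EReal} (h : ∀ i ∈ s, (a i : EReal) ≤ b i + c i + w i - d i) :
    ∑ i ∈ s, (a i : EReal) ≤
      ∑ i ∈ s, (b i : EReal) + ∑ i ∈ s, (c i : EReal) + ∑ i ∈ s, w i - ∑ i ∈ s, (d i : EReal) := by
  simp only [← coe_finset_sum, coe_le_add_add_sub_coe_iff] at h ⊢
  calc (((∑ i ∈ s, a i) - ∑ i ∈ s, b i - ∑ i ∈ s, c i + ∑ i ∈ s, d i : ℝ) : EReal)
      = ∑ i ∈ s, ((a i - b i - c i + d i : ℝ) : EReal) := by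
        rw [← coe_finset_sum]
        simp only [sum_add_distrib, sum_sub_distrib]
    _ ≤ ∑ i ∈ s, w i := sum_le_sum h

end EReal

theorem coe_sub_le_phiConj {Φ : ℝ → EReal} {r B : ℝ} (hr : 0 ≤ r) (h : Φ r ≤ B) (s : ℝ) :
    ((s * r - B : ℝ) : EReal) ≤ phiConj Φ s :=
  (EReal.sub_le_sub le_rfl h).trans
    (le_iSup (fun r : {r : ℝ // 0 ≤ r} => ((s * r.1 : ℝ) : EReal) - Φ r.1) ⟨r, hr⟩)

theorem rescale_succ_eq_sub_smul {M : Type*} [AddCommGroup M] [Module ℝ M] {a : M}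
    {η θ : ℕ → ℝ} {x y : ℕ → M} {t : ℕ} (ht : 1 ≤ t) (hη : η (t + 1) ≠ 0)
    (hy : y t = a - η t • ∑ i ∈ Ico 1 t, θ i • x i)
    (hy' : y (t + 1) = a - η (t + 1) • ∑ i ∈ Ico 1 (t + 1), θ i • x i) :
    a + (η t / η (t + 1)) • (y (t + 1) - a) = y t - (η t * θ t) • x t := by
  rw [hy, hy', sum_Ico_succ_top ht]
  match_scalars <;> field_simp
  ring

section Subdifferential

variable {E : Type*} [NormedAddCommGroup E] [NormedSpace ℝ E]
  {g : E → EReal} {x : E} {p : E →L[ℝ] ℝ} {r : ℝ}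

theorem fconj_le_coe_iff {c : ℝ} :
    fconj g p ≤ c ↔ ∀ y, ((p y - c : ℝ) : EReal) ≤ g y := by
  simp only [fconj, iSup_le_iff, EReal.coe_sub_le_coe_iff]

theorem fconj_eq_of_forall_le (hx : g x = r) (h : ∀ y, ((r + p (y - x) : ℝ) : EReal) ≤ g y) :
    fconj g p = ((p x - r : ℝ) : EReal) := by
  refine le_antisymm (fconj_le_coe_iff.2 fun y => ?_) ?_
  · convert h y using 2
    rw [map_sub]; ring
  · exact (le_iSup (fun y => ((p y : ℝ) : EReal) - g y) x).trans_eq' (by rw [hx]; rfl)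

theorem mem_subdiff_iff :
    p ∈ subdiff g x ↔ ∃ r : ℝ, g x = r ∧ ∀ y, ((r + p (y - x) : ℝ) : EReal) ≤ g y := by
  refine ⟨fun hp => ?_, fun ⟨r, hr, h⟩ => ?_⟩
  · obtain ⟨r, c, hr, hc, hrc⟩ := EReal.exists_coe_of_add_sub_coe_eq_zero hp
    refine ⟨r, hr, fun y => ?_⟩
    convert fconj_le_coe_iff.1 hc.le y using 2
    rw [map_sub]; linarith
  · change breg g x p = 0
    rw [breg, hr, fconj_eq_of_forall_le hr h]
    norm_cast
    ring

theorem fconj_eq_of_mem_subdiff (hp : p ∈ subdiff g x) (hx : g x = r) :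
    fconj g p = ((p x - r : ℝ) : EReal) := by
  obtain ⟨r', hr', h⟩ := mem_subdiff_iff.1 hp
  obtain rfl : r' = r := by exact_mod_cast hr'.symm.trans hx
  exact fconj_eq_of_forall_le hx h

theorem ne_bot_of_mem_subdiff (hp : p ∈ subdiff g x) (y : E) : g y ≠ ⊥ := by
  obtain ⟨r, -, h⟩ := mem_subdiff_iff.1 hp
  exact ne_bot_of_le_ne_bot (EReal.coe_ne_bot _) (h y)

theorem breg_eq_of_mem_subdiff {w : E} {s : ℝ} (hp : p ∈ subdiff g x) (hx : g x = r)
    (hw : g w = s) : breg g w p = ((s - r - p (w - x) : ℝ) : EReal) := by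
  rw [breg, hw, fconj_eq_of_mem_subdiff hp hx, map_sub]
  norm_cast
  ring

theorem add_smul_mem_subdiff {a : E →L[ℝ] ℝ} {η : ℝ} (hη : 0 < η)
    (h : p ∈ subdiff (fun y => ((1 / η : ℝ) : EReal) * (g y - ((a y : ℝ) : EReal))) x) :
    a + η • p ∈ subdiff g x := by
  obtain ⟨r, hr, hle⟩ := mem_subdiff_iff.1 h
  refine mem_subdiff_iff.2
    ⟨a x + η * r, (EReal.one_div_mul_sub_coe_eq_coe_iff hη _ _ _).1 hr, fun y => ?_⟩
  convert (EReal.coe_le_one_div_mul_sub_coe_iff hη _ _ _).1 (hle y) using 2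
  simp only [map_sub, add_apply, smul_apply, smul_eq_mul]
  ring

def IsPhiConvex (Φ : ℝ → EReal) (ψ : E → EReal) : Prop :=
  ∀ (x y : E) (p : E →L[ℝ] ℝ), p ∈ subdiff ψ y → Φ ‖x - y‖ ≤ breg ψ x p

theorem round_regret_bound {Φ : ℝ → EReal} {ψ f : E → EReal} (hψ : IsPhiConvex Φ ψ) {c : ℝ}
    (hc : 0 < c) {xcheck xtil xhat xstar q : E →L[ℝ] ℝ} {y y' xt X z : E}
    (hxcheck : xcheck ∈ subdiff ψ y) (hxtil : xtil ∈ subdiff ψ y')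
    (hxt : xtil - c • xhat ∈ subdiff ψ xt) (hf : xstar ∈ subdiff f xt)
    (hq : q = xcheck - c • xstar) (hX : q ∈ subdiff ψ X) (hψz : ψ z < ⊤) (hfz : f z < ⊤) :
    ∃ a b₁ b₂ b₄ : ℝ, f xt - f z = a ∧
      ((1 / c : ℝ) : EReal) * (breg ψ z xcheck - breg ψ z q) = b₁ ∧
      ((1 / c : ℝ) : EReal) * (breg ψ X xtil - breg ψ X xcheck) = b₂ ∧
      ((1 / c : ℝ) : EReal) * breg ψ xt xtil = b₄ ∧
      (a : EReal) ≤ b₁ + b₂ + ((1 / c : ℝ) : EReal) * phiConj Φ (c * ‖xstar - xhat‖) - b₄ := by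
  obtain ⟨ψy, hψy, -⟩ := mem_subdiff_iff.1 hxcheck
  obtain ⟨ψy', hψy', -⟩ := mem_subdiff_iff.1 hxtil
  obtain ⟨ψxt, hψxt, -⟩ := mem_subdiff_iff.1 hxt
  obtain ⟨ψX, hψX, -⟩ := mem_subdiff_iff.1 hX
  obtain ⟨fxt, hfxt, hf_le⟩ := mem_subdiff_iff.1 hf
  obtain ⟨ψz, hψz⟩ : ∃ s : ℝ, ψ z = s :=
    ⟨_, (EReal.coe_toReal hψz.ne (ne_bot_of_mem_subdiff hxcheck z)).symm⟩
  obtain ⟨fz, hfz⟩ : ∃ s : ℝ, f z = s :=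
    ⟨_, (EReal.coe_toReal hfz.ne (ne_bot_of_mem_subdiff hf z)).symm⟩
  have h_subgrad : fxt + xstar (z - xt) ≤ fz := by exact_mod_cast hfz ▸ hf_le z
  have h_conj := coe_sub_le_phiConj (norm_nonneg (X - xt))
    ((hψ X xt _ hxt).trans_eq (breg_eq_of_mem_subdiff hxt hψxt hψX)) (c * ‖xstar - xhat‖)
  have h_dual : (xstar - xhat) (xt - X) ≤ ‖xstar - xhat‖ * ‖X - xt‖ := by
    rw [← norm_sub_rev xt]
    exact (le_abs_self _).trans ((xstar - xhat).le_opNorm _)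
  refine ⟨fxt - fz, 1 / c * ((ψz - ψy - xcheck (z - y)) - (ψz - ψX - q (z - X))),
    1 / c * ((ψX - ψy' - xtil (X - y')) - (ψX - ψy - xcheck (X - y))),
    1 / c * (ψxt - ψy' - xtil (xt - y')), ?_, ?_, ?_, ?_, ?_⟩
  · rw [hfxt, hfz]; rfl
  · rw [breg_eq_of_mem_subdiff hxcheck hψy hψz, breg_eq_of_mem_subdiff hX hψX hψz]; rfl
  · rw [breg_eq_of_mem_subdiff hxtil hψy' hψX, breg_eq_of_mem_subdiff hxcheck hψy hψX]; rfl
  · rw [breg_eq_of_mem_subdiff hxtil hψy' hψxt]; rfl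
  · rw [EReal.coe_le_add_add_sub_coe_iff]
    refine le_trans ?_ (mul_le_mul_of_nonneg_left h_conj (by exact_mod_cast (one_div_pos.2 hc).le))
    norm_cast
    subst hq
    simp only [map_sub, sub_apply, smul_apply, smul_eq_mul] at h_subgrad h_dual ⊢
    rw [← mul_le_mul_iff_of_pos_left hc]
    field_simp
    linarith [mul_le_mul_of_nonneg_left h_subgrad hc.le, mul_le_mul_of_nonneg_left h_dual hc.le]

end Subdifferential

theorem dynamic_regret_S_I_general
    {E : Type*} [NormedAddCommGroup E] [NormedSpace ℝ E]
    (Φ : ℝ → EReal)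
    (ψ : E → EReal)
    (hψ : ∀ (x y : E) (p : E →L[ℝ] ℝ), p ∈ subdiff ψ y → Φ ‖x - y‖ ≤ breg ψ x p)
    (T : ℕ)
    (apsi : E →L[ℝ] ℝ)
    (η θ : ℕ → ℝ)
    (hη : ∀ t ∈ Icc 1 (T + 1), 0 < η t) (hθ : ∀ t ∈ Icc 1 T, 0 < θ t)
    (xhat xstar : ℕ → E →L[ℝ] ℝ)
    (xcheck : ℕ → E →L[ℝ] ℝ)
    (hxcheck : ∀ t ∈ Icc 1 (T + 1),
      xcheck t = apsi - η t • ∑ i ∈ Ico 1 t, θ i • xstar i)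
    (xtil xt : ℕ → E) (xtilpsi : ℕ → E →L[ℝ] ℝ)
    (hxtil₁ : ∀ t ∈ Icc 1 T, xcheck t ∈ subdiff ψ (xtil t))
    (hxtil₂ : ∀ t ∈ Icc 1 T, xtilpsi t ∈ subdiff ψ (xtil t))
    (hxt : ∀ t ∈ Icc 1 T, xtilpsi t - (η t * θ t) • xhat t ∈ subdiff ψ (xt t))
    (f : ℕ → E → EReal)
    (hf : ∀ t ∈ Icc 1 T, xstar t ∈ subdiff (f t) (xt t))
    (X : ℕ → E)
    (hX : ∀ t ∈ Icc 1 T,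
      (1 / η (t + 1)) • (xcheck (t + 1) - apsi) ∈
        subdiff (fun x => ((1 / η t : ℝ) : EReal) * (ψ x - ((apsi x : ℝ) : EReal)))
          (X (t + 1)))
    (z : ℕ → E)
    (hz : ∀ t ∈ Icc 1 T, ψ (z t) < ⊤ ∧ f t (z t) < ⊤) :
    ∑ t ∈ Icc 1 T, (f t (xt t) - f t (z t)) ≤
      (∑ t ∈ Icc 1 T, ((1 / (η t * θ t) : ℝ) : EReal) *
          (breg ψ (z t) (xcheck t) -
           breg ψ (z t) (apsi + (η t / η (t + 1)) • (xcheck (t + 1) - apsi))))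
      + (∑ t ∈ Icc 1 T, ((1 / (η t * θ t) : ℝ) : EReal) *
          (breg ψ (X (t + 1)) (xtilpsi t) - breg ψ (X (t + 1)) (xcheck t)))
      + (∑ t ∈ Icc 1 T, ((1 / (η t * θ t) : ℝ) : EReal) *
          phiConj Φ (η t * θ t * ‖xstar t - xhat t‖))
      - ∑ t ∈ Icc 1 T, ((1 / (η t * θ t) : ℝ) : EReal) *
          breg ψ (xt t) (xtilpsi t) := by
  have step : ∀ t ∈ Icc 1 T, ∃ a b₁ b₂ b₄ : ℝ, f t (xt t) - f t (z t) = a ∧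
      ((1 / (η t * θ t) : ℝ) : EReal) * (breg ψ (z t) (xcheck t) -
        breg ψ (z t) (apsi + (η t / η (t + 1)) • (xcheck (t + 1) - apsi))) = b₁ ∧
      ((1 / (η t * θ t) : ℝ) : EReal) *
        (breg ψ (X (t + 1)) (xtilpsi t) - breg ψ (X (t + 1)) (xcheck t)) = b₂ ∧
      ((1 / (η t * θ t) : ℝ) : EReal) * breg ψ (xt t) (xtilpsi t) = b₄ ∧
      (a : EReal) ≤ b₁ + b₂ + ((1 / (η t * θ t) : ℝ) : EReal) *
        phiConj Φ (η t * θ t * ‖xstar t - xhat t‖) - b₄ := by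
    intro t ht
    obtain ⟨ht₁, htT⟩ := mem_Icc.1 ht
    have hηt := hη t (mem_Icc.2 ⟨ht₁, by omega⟩)
    have hηt' := hη (t + 1) (mem_Icc.2 ⟨by omega, by omega⟩)
    have hq := rescale_succ_eq_sub_smul ht₁ hηt'.ne' (hxcheck t (mem_Icc.2 ⟨ht₁, by omega⟩))
      (hxcheck (t + 1) (mem_Icc.2 ⟨by omega, by omega⟩))
    have hqX : apsi + (η t / η (t + 1)) • (xcheck (t + 1) - apsi) ∈ subdiff ψ (X (t + 1)) := by
      simpa only [smul_smul, mul_one_div] using add_smul_mem_subdiff hηt (hX t ht)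
    exact round_regret_bound hψ (mul_pos hηt (hθ t ht)) (hxtil₁ t ht) (hxtil₂ t ht) (hxt t ht)
      (hf t ht) hq hqX (hz t ht).1 (hz t ht).2
  choose! a b₁ b₂ b₄ ha hb₁ hb₂ hb₄ hle using step
  rw [sum_congr rfl ha, sum_congr rfl hb₁, sum_congr rfl hb₂, sum_congr rfl hb₄]
  exact EReal.sum_coe_le_sum_add_sum_add_sum_sub_sum hle

/-- **Dynamic regret for the strategy S-I.** -/
theorem dynamic_regret_S_I
    {E : Type*} [NormedAddCommGroup E] [NormedSpace ℝ E]
    (Φ : ℝ → EReal)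
    (hΦconv : ∀ a b s t : ℝ, 0 ≤ a → 0 ≤ b → a + b = 1 → 0 ≤ s → 0 ≤ t →
      Φ (a * s + b * t) ≤ (a : EReal) * Φ s + (b : EReal) * Φ t)
    (hΦ0 : Φ 0 = 0) (hΦnn : ∀ s : ℝ, 0 ≤ s → 0 ≤ Φ s)
    (ψ : E → EReal) (hbot : ∀ x, ψ x ≠ ⊥) (hproper : ∃ x, ψ x ≠ ⊤)
    (hψ : ∀ (x y : E) (p : E →L[ℝ] ℝ), p ∈ subdiff ψ y → Φ ‖x - y‖ ≤ breg ψ x p)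
    (T : ℕ) (hT : 1 ≤ T)
    (a : E) (apsi : E →L[ℝ] ℝ) (ha : apsi ∈ subdiff ψ a)
    (η θ : ℕ → ℝ)
    (hη : ∀ t ∈ Icc 1 (T + 1), 0 < η t) (hθ : ∀ t ∈ Icc 1 T, 0 < θ t)
    (xhat xstar : ℕ → E →L[ℝ] ℝ)
    (xcheck : ℕ → E →L[ℝ] ℝ)
    (hxcheck : ∀ t ∈ Icc 1 (T + 1),
      xcheck t = apsi - η t • ∑ i ∈ Ico 1 t, θ i • xstar i)
    (xtil xt : ℕ → E) (xtilpsi : ℕ → E →L[ℝ] ℝ)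
    (hxtil₁ : ∀ t ∈ Icc 1 T, xcheck t ∈ subdiff ψ (xtil t))
    (hxtil₂ : ∀ t ∈ Icc 1 T, xtilpsi t ∈ subdiff ψ (xtil t))
    (hxt : ∀ t ∈ Icc 1 T, xtilpsi t - (η t * θ t) • xhat t ∈ subdiff ψ (xt t))
    (f : ℕ → E → EReal)
    (hf : ∀ t ∈ Icc 1 T, xstar t ∈ subdiff (f t) (xt t))
    (X : ℕ → E)
    (hX : ∀ t ∈ Icc 1 T,
      (1 / η (t + 1)) • (xcheck (t + 1) - apsi) ∈
        subdiff (fun x => ((1 / η t : ℝ) : EReal) * (ψ x - ((apsi x : ℝ) : EReal)))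
          (X (t + 1)))
    (z : ℕ → E)
    (hz : ∀ t ∈ Icc 1 T, ψ (z t) < ⊤ ∧ f t (z t) < ⊤) :
    ∑ t ∈ Icc 1 T, (f t (xt t) - f t (z t)) ≤
      (∑ t ∈ Icc 1 T, ((1 / (η t * θ t) : ℝ) : EReal) *
          (breg ψ (z t) (xcheck t) -
           breg ψ (z t) (apsi + (η t / η (t + 1)) • (xcheck (t + 1) - apsi))))
      + (∑ t ∈ Icc 1 T, ((1 / (η t * θ t) : ℝ) : EReal) *
          (breg ψ (X (t + 1)) (xtilpsi t) - breg ψ (X (t + 1)) (xcheck t)))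
      + (∑ t ∈ Icc 1 T, ((1 / (η t * θ t) : ℝ) : EReal) *
          phiConj Φ (η t * θ t * ‖xstar t - xhat t‖))
      - ∑ t ∈ Icc 1 T, ((1 / (η t * θ t) : ℝ) : EReal) *
          breg ψ (xt t) (xtilpsi t) :=
  dynamic_regret_S_I_general Φ ψ hψ T apsi η θ hη hθ xhat xstar xcheck hxcheck xtil xt xtilpsi
    hxtil₁ hxtil₂ hxt f hf X hX z hz
end

section
/- Dynamic regret for S: Let E be a real normed vector space, φ: [0,∞) → [0,+∞] convex with φ(0) = 0, and ψ: E → ℝ ∪ {+∞} proper and φ-convex. Fix T ≥ 1, a ∈ E, a^ψ ∈ ∂ψ(a), positive reals η_1,…,η_{T+1} and θ_1,…,θ_T, and x̂_1*,…,x̂_T* ∈ E*. For t = 1,…,T+1 set x̃_t^ψ = a^ψ − η_t Σ_{i=1}^{t−1} θ_i x_i*, and suppose for t = 1,…,T there are x̃_t, x_t ∈ E with x̃_t^ψ ∈ ∂ψ(x̃_t) and x̃_t^ψ − η_t θ_t x̂_t* ∈ ∂ψ(x_t); suppose f_t: E → ℝ ∪ {+∞} satisfies x_t* ∈ ∂f_t(x_t);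 and suppose there exists X_{t+1} ∈ E with (1/η_{t+1})(x̃_{t+1}^ψ − a^ψ) ∈ ∂ψ̃_t(X_{t+1}), where ψ̃_t(x) = (1/η_t)(ψ(x) − ⟨a^ψ, x⟩). Then for all z_1,…,z_T ∈ dom ψ with f_t(z_t) < +∞: Σ_{t=1}^T (f_t(x_t) − f_t(z_t)) ≤ Σ_{t=1}^T (1/(η_tθ_t))[B_ψ(z_t, x̃_t^ψ) − B_ψ(z_t, a^ψ + (η_t/η_{t+1})(x̃_{t+1}^ψ − a^ψ))] + Σ_{t=1}^T (1/(η_tθ_t)) φ*(η_tθ_t‖x_t* − x̂_t*‖) − Σ_{t=1}^T (1/(η_tθ_t)) B_ψ(x_t, x̃_t^ψ). -/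
open Finset

section Helpers

variable {E : Type*} [NormedAddCommGroup E] [NormedSpace ℝ E]

theorem le_fconj (g : E → EReal) (p : E →L[ℝ] ℝ) (x : E) :
    ((p x : ℝ) : EReal) - g x ≤ fconj g p :=
  le_iSup (fun x => ((p x : ℝ) : EReal) - g x) x

theorem ereal_triple {u v : EReal} {w : ℝ} (h : u + v - (w : EReal) = 0) :
    ∃ a b : ℝ, u = (a : EReal) ∧ v = (b : EReal) ∧ a + b = w := by
  induction u using EReal.rec with
  | bot => simp [sub_eq_add_neg] at h
  | top =>
    induction v using EReal.rec with
    | bot => simp [sub_eq_add_neg] at h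
    | top => simp [sub_eq_add_neg] at h
    | coe b => simp [sub_eq_add_neg, ← EReal.coe_neg] at h
  | coe a =>
    induction v using EReal.rec with
    | bot => simp [sub_eq_add_neg] at h
    | top => simp [sub_eq_add_neg, ← EReal.coe_neg] at h
    | coe b =>
      refine ⟨a, b, rfl, rfl, ?_⟩
      rw [← EReal.coe_add, ← EReal.coe_sub] at h
      have : a + b - w = 0 := by exact_mod_cast h
      linarith

theorem subdiff_elim {g : E → EReal} {y : E} {p : E →L[ℝ] ℝ} (h : p ∈ subdiff g y) :
    ∃ gy gs : ℝ, g y = (gy : EReal) ∧ fconj g p = (gs : EReal) ∧ gy + gs = p y :=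
  ereal_triple h

theorem fconj_lb {g : E → EReal} {p : E →L[ℝ] ℝ} {gs : ℝ} (hgs : fconj g p = (gs : EReal))
    {x : E} {gx : ℝ} (hx : g x = (gx : EReal)) : p x - gx ≤ gs := by
  have h := le_fconj g p x
  rw [hx, hgs, ← EReal.coe_sub] at h
  exact_mod_cast h

theorem ereal_ne_bot_top {u : EReal} (h1 : u ≠ ⊥) (h2 : u ≠ ⊤) :
    ∃ r : ℝ, u = (r : EReal) := by
  induction u using EReal.rec with
  | bot => exact absurd rfl h1
  | top => exact absurd rfl h2
  | coe r => exact ⟨r, rfl⟩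

theorem ereal_coe_sum {α : Type*} (s : Finset α) (v : α → ℝ) :
    (∑ t ∈ s, ((v t : ℝ) : EReal)) = ((∑ t ∈ s, v t : ℝ) : EReal) := by
  induction s using Finset.cons_induction with
  | empty => simp
  | cons a s ha ih => rw [Finset.sum_cons, Finset.sum_cons, ih, EReal.coe_add]

end Helpers

set_option maxHeartbeats 2000000 in
/-- **Dynamic regret for the strategy S.** -/
theorem dynamic_regret_S
    {E : Type*} [NormedAddCommGroup E] [NormedSpace ℝ E]
    (Φ : ℝ → EReal)
    (hΦconv : ∀ a b s t : ℝ, 0 ≤ a → 0 ≤ b → a + b = 1 → 0 ≤ s → 0 ≤ t →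
      Φ (a * s + b * t) ≤ (a : EReal) * Φ s + (b : EReal) * Φ t)
    (hΦ0 : Φ 0 = 0) (hΦnn : ∀ s : ℝ, 0 ≤ s → 0 ≤ Φ s)
    (ψ : E → EReal) (hbot : ∀ x, ψ x ≠ ⊥) (hproper : ∃ x, ψ x ≠ ⊤)
    (hψ : ∀ (x y : E) (p : E →L[ℝ] ℝ), p ∈ subdiff ψ y → Φ ‖x - y‖ ≤ breg ψ x p)
    (T : ℕ) (hT : 1 ≤ T)
    (a : E) (apsi : E →L[ℝ] ℝ) (ha : apsi ∈ subdiff ψ a)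
    (η θ : ℕ → ℝ)
    (hη : ∀ t ∈ Icc 1 (T + 1), 0 < η t) (hθ : ∀ t ∈ Icc 1 T, 0 < θ t)
    (xhat xstar : ℕ → E →L[ℝ] ℝ)
    (xtilpsi : ℕ → E →L[ℝ] ℝ)
    (hxtilpsi : ∀ t ∈ Icc 1 (T + 1),
      xtilpsi t = apsi - η t • ∑ i ∈ Ico 1 t, θ i • xstar i)
    (xtil xt : ℕ → E)
    (hxtil : ∀ t ∈ Icc 1 T, xtilpsi t ∈ subdiff ψ (xtil t))
    (hxt : ∀ t ∈ Icc 1 T, xtilpsi t - (η t * θ t) • xhat t ∈ subdiff ψ (xt t))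
    (f : ℕ → E → EReal)
    (hf : ∀ t ∈ Icc 1 T, xstar t ∈ subdiff (f t) (xt t))
    (X : ℕ → E)
    (hX : ∀ t ∈ Icc 1 T,
      (1 / η (t + 1)) • (xtilpsi (t + 1) - apsi) ∈
        subdiff (fun x => ((1 / η t : ℝ) : EReal) * (ψ x - ((apsi x : ℝ) : EReal)))
          (X (t + 1)))
    (z : ℕ → E)
    (hz : ∀ t ∈ Icc 1 T, ψ (z t) < ⊤ ∧ f t (z t) < ⊤) :
    ∑ t ∈ Icc 1 T, (f t (xt t) - f t (z t)) ≤
      (∑ t ∈ Icc 1 T, ((1 / (η t * θ t) : ℝ) : EReal) *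
          (breg ψ (z t) (xtilpsi t) -
           breg ψ (z t) (apsi + (η t / η (t + 1)) • (xtilpsi (t + 1) - apsi))))
      + (∑ t ∈ Icc 1 T, ((1 / (η t * θ t) : ℝ) : EReal) *
          phiConj Φ (η t * θ t * ‖xstar t - xhat t‖))
      - ∑ t ∈ Icc 1 T, ((1 / (η t * θ t) : ℝ) : EReal) *
          breg ψ (xt t) (xtilpsi t) := by
  classical
  have key : ∀ t ∈ Icc 1 T, ∃ A B C : ℝ,
      (f t (xt t) - f t (z t)) = (A : EReal) ∧
      (breg ψ (z t) (xtilpsi t) -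
        breg ψ (z t) (apsi + (η t / η (t + 1)) • (xtilpsi (t + 1) - apsi))) = (B : EReal) ∧
      breg ψ (xt t) (xtilpsi t) = (C : EReal) ∧
      (A : EReal) ≤ ((1 / (η t * θ t) * B : ℝ) : EReal)
        + ((1 / (η t * θ t) : ℝ) : EReal) * phiConj Φ (η t * θ t * ‖xstar t - xhat t‖)
        + ((-(1 / (η t * θ t) * C) : ℝ) : EReal) := by
    intro t ht
    obtain ⟨ht1, htT⟩ := mem_Icc.1 ht
    have htA : t ∈ Icc 1 (T + 1) := mem_Icc.2 ⟨ht1, by omega⟩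
    have htB : t + 1 ∈ Icc 1 (T + 1) := mem_Icc.2 ⟨by omega, by omega⟩
    have hηt : 0 < η t := hη t htA
    have hηt1 : 0 < η (t + 1) := hη (t + 1) htB
    have hθt : 0 < θ t := hθ t ht
    have hc : 0 < η t * θ t := mul_pos hηt hθt
    -- the point at which the second Bregman divergence is evaluated
    have hqeq : apsi + (η t / η (t + 1)) • (xtilpsi (t + 1) - apsi)
        = xtilpsi t - (η t * θ t) • xstar t := by
      rw [hxtilpsi t htA, hxtilpsi (t + 1) htB, Finset.sum_Ico_succ_top ht1,
        sub_sub_cancel_left, smul_neg, smul_smul, div_mul_cancel₀ _ (ne_of_gt hηt1),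
        smul_add, smul_smul]
      abel
    set q : E →L[ℝ] ℝ := xtilpsi t - (η t * θ t) • xstar t with hqdef
    have hqr : q = apsi + η t • ((1 / η (t + 1)) • (xtilpsi (t + 1) - apsi)) := by
      rw [smul_smul, mul_one_div]
      exact hqeq.symm
    -- step 1 : q ∈ ∂ψ(X (t+1))
    obtain ⟨Ar, Br, hAr, hBr, hABr⟩ := subdiff_elim (hX t ht)

    have hψXne : ψ (X (t + 1)) ≠ ⊤ := by
      intro htop
      rw [htop, EReal.top_sub_coe, EReal.coe_mul_top_of_pos (by positivity)] at hAr
      exact EReal.top_ne_coe Ar hAr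
    obtain ⟨w, hw⟩ := ereal_ne_bot_top (hbot _) hψXne
    have hwA : w = η t * Ar + apsi (X (t + 1)) := by
      rw [hw, ← EReal.coe_sub, ← EReal.coe_mul] at hAr
      have h' : 1 / η t * (w - apsi (X (t + 1))) = Ar := by exact_mod_cast hAr
      field_simp at h'
      linarith
    have hub : fconj ψ q ≤ ((q (X (t + 1)) - w : ℝ) : EReal) := by
      refine iSup_le fun x => ?_
      rcases eq_or_ne (ψ x) ⊤ with hx | hx
      · rw [hx]
        simp [sub_eq_add_neg]
      · obtain ⟨wx, hwx⟩ := ereal_ne_bot_top (hbot x) hx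
        have h1 := le_fconj (fun x => ((1 / η t : ℝ) : EReal) * (ψ x - ((apsi x : ℝ) : EReal)))
          ((1 / η (t + 1)) • (xtilpsi (t + 1) - apsi)) x
        rw [hBr] at h1

        rw [hwx, ← EReal.coe_sub, ← EReal.coe_mul, ← EReal.coe_sub] at h1
        have h1' : ((1 / η (t + 1)) • (xtilpsi (t + 1) - apsi)) x
            - 1 / η t * (wx - apsi x) ≤ Br := by exact_mod_cast h1
        rw [hwx, ← EReal.coe_sub, EReal.coe_le_coe_iff]
        set rx : ℝ := ((1 / η (t + 1)) • (xtilpsi (t + 1) - apsi)) x with hrxd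
        set rX : ℝ := ((1 / η (t + 1)) • (xtilpsi (t + 1) - apsi)) (X (t + 1)) with hrXd
        have hqx : q x = apsi x + η t * rx := by
          rw [hqr, hrxd]
          simp
        have hqX : q (X (t + 1)) = apsi (X (t + 1)) + η t * rX := by
          rw [hqr, hrXd]
          simp
        have m1 : η t * rx - (wx - apsi x) ≤ η t * Br := by
          have h2 := mul_le_mul_of_nonneg_left h1' hηt.le
          have h3 : η t * (1 / η t * (wx - apsi x)) = wx - apsi x := by field_simp
          linarith [h2, h3]
        have m2 : η t * Br = η t * rX - η t * Ar := by
          have h4 : η t * (Ar + Br) = η t * rX := by rw [hABr]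
          linarith [h4]
        linarith [m1, m2, hqx, hqX, hwA]
    have hlb := le_fconj ψ q (X (t + 1))
    rw [hw, ← EReal.coe_sub] at hlb
    have hfq : fconj ψ q = ((q (X (t + 1)) - w : ℝ) : EReal) := le_antisymm hub hlb
    have hqsub : q ∈ subdiff ψ (X (t + 1)) := by
      show breg ψ (X (t + 1)) q = 0
      rw [breg, hw, hfq, ← EReal.coe_add, ← EReal.coe_sub]
      norm_cast
      ring
    -- step 2 : extract real values
    obtain ⟨u1, ψsp, _, hψsp, _⟩ := subdiff_elim (hxtil t ht)
    obtain ⟨ψxt, ψsr, hψxt, hψsr, hxtr⟩ := subdiff_elim (hxt t ht)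
    obtain ⟨ψX2, ψsq, hψX2, hψsq, hXq⟩ := subdiff_elim hqsub
    obtain ⟨fx, fs, hfx, hfs, hfx2⟩ := subdiff_elim (hf t ht)
    obtain ⟨Zt, hZt⟩ := ereal_ne_bot_top (hbot (z t)) (hz t ht).1.ne
    have hfznebot : f t (z t) ≠ ⊥ := by
      intro hb
      have h := le_fconj (f t) (xstar t) (z t)
      rw [hb, hfs] at h
      simp [sub_eq_add_neg] at h
    obtain ⟨fz, hfz⟩ := ereal_ne_bot_top hfznebot (hz t ht).2.ne
    -- step 3 : key real inequalities
    have hfineq : fx - fz ≤ xstar t (xt t) - xstar t (z t) := by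
      have h := fconj_lb hfs hfz
      linarith
    -- φ-convexity at (X (t+1), xt t)
    have hφle := hψ (X (t + 1)) (xt t) _ (hxt t ht)
    have hbregX : breg ψ (X (t + 1)) (xtilpsi t - (η t * θ t) • xhat t)
        = ((ψX2 + ψsr - (xtilpsi t - (η t * θ t) • xhat t) (X (t + 1)) : ℝ) : EReal) := by
      rw [breg, hψX2, hψsr, ← EReal.coe_add, ← EReal.coe_sub]
    rw [hbregX] at hφle
    have hφnn' := hΦnn ‖X (t + 1) - xt t‖ (norm_nonneg _)
    have hφnebot : Φ ‖X (t + 1) - xt t‖ ≠ ⊥ :=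
      ne_of_gt (lt_of_lt_of_le (by simp) hφnn')
    have hφnetop : Φ ‖X (t + 1) - xt t‖ ≠ ⊤ :=
      ne_top_of_le_ne_top (EReal.coe_ne_top _) hφle
    obtain ⟨φr, hφr⟩ := ereal_ne_bot_top hφnebot hφnetop
    have hφr1 : 0 ≤ φr := by
      rw [hφr] at hφnn'
      exact_mod_cast hφnn'
    have hφr2 : φr ≤ ψX2 + ψsr - (xtilpsi t - (η t * θ t) • xhat t) (X (t + 1)) := by
      rw [hφr] at hφle
      exact_mod_cast hφle
    -- pairing bound
    have hpair : (xstar t - xhat t) (xt t - X (t + 1))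
        ≤ ‖xstar t - xhat t‖ * ‖X (t + 1) - xt t‖ := by
      calc (xstar t - xhat t) (xt t - X (t + 1))
          ≤ ‖(xstar t - xhat t) (xt t - X (t + 1))‖ := le_abs_self _
        _ ≤ ‖xstar t - xhat t‖ * ‖xt t - X (t + 1)‖ := ContinuousLinearMap.le_opNorm _ _
        _ = ‖xstar t - xhat t‖ * ‖X (t + 1) - xt t‖ := by rw [norm_sub_rev (xt t) (X (t + 1))]
    -- applications of q and of the shifted functional
    have happ : ∀ v : E, q v = xtilpsi t v - (η t * θ t) * xstar t v := by
      intro v; rw [hqdef]; simp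
    have happ2 : ∀ v : E, (xtilpsi t - (η t * θ t) • xhat t) v
        = xtilpsi t v - (η t * θ t) * xhat t v := by
      intro v; simp
    have happ3 : (xstar t - xhat t) (xt t - X (t + 1))
        = xstar t (xt t) - xstar t (X (t + 1)) - xhat t (xt t) + xhat t (X (t + 1)) := by
      simp [map_sub]
      ring
    -- the main real bound on B(x_t, q)
    have hBxq : ψxt + ψsq - q (xt t) + φr
        ≤ η t * θ t * ‖xstar t - xhat t‖ * ‖X (t + 1) - xt t‖ := by
      have hmul := mul_le_mul_of_nonneg_left hpair hc.le
      rw [happ3] at hmul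
      have e1 := happ (xt t)
      have e2 := happ (X (t + 1))
      have e3 := happ2 (xt t)
      have e4 := happ2 (X (t + 1))
      linarith [hmul, hXq, hxtr, hφr2, e1, e2, e3, e4]
    -- EReal bound through phiConj
    have hBxqE : ((ψxt + ψsq - q (xt t) : ℝ) : EReal)
        ≤ phiConj Φ (η t * θ t * ‖xstar t - xhat t‖) := by
      have h1 : ((ψxt + ψsq - q (xt t) : ℝ) : EReal)
          ≤ ((η t * θ t * ‖xstar t - xhat t‖ * ‖X (t + 1) - xt t‖ - φr : ℝ) : EReal) := by
        apply EReal.coe_le_coe_iff.2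
        linarith
      refine h1.trans ?_
      have h2 : ((η t * θ t * ‖xstar t - xhat t‖ * ‖X (t + 1) - xt t‖ - φr : ℝ) : EReal)
          = ((η t * θ t * ‖xstar t - xhat t‖ * ‖X (t + 1) - xt t‖ : ℝ) : EReal)
            - Φ ‖X (t + 1) - xt t‖ := by
        rw [hφr, ← EReal.coe_sub]
      rw [h2]
      exact le_iSup (fun r : {r : ℝ // 0 ≤ r} =>
        ((η t * θ t * ‖xstar t - xhat t‖ * r.1 : ℝ) : EReal) - Φ r.1)
        ⟨‖X (t + 1) - xt t‖, norm_nonneg _⟩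
    -- breg values as reals
    have hbreg1 : breg ψ (z t) (xtilpsi t)
        = ((Zt + ψsp - xtilpsi t (z t) : ℝ) : EReal) := by
      rw [breg, hZt, hψsp, ← EReal.coe_add, ← EReal.coe_sub]
    have hbreg2 : breg ψ (z t) (apsi + (η t / η (t + 1)) • (xtilpsi (t + 1) - apsi))
        = ((Zt + ψsq - q (z t) : ℝ) : EReal) := by
      rw [hqeq, breg, hZt, hψsq, ← EReal.coe_add, ← EReal.coe_sub]
    have hbreg3 : breg ψ (xt t) (xtilpsi t)
        = ((ψxt + ψsp - xtilpsi t (xt t) : ℝ) : EReal) := by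
      rw [breg, hψxt, hψsp, ← EReal.coe_add, ← EReal.coe_sub]
    refine ⟨fx - fz, (Zt + ψsp - xtilpsi t (z t)) - (Zt + ψsq - q (z t)),
      ψxt + ψsp - xtilpsi t (xt t), ?_, ?_, hbreg3, ?_⟩
    · rw [hfx, hfz, ← EReal.coe_sub]
    · rw [hbreg1, hbreg2, ← EReal.coe_sub]
    · -- the per-term inequality
      have hfour : (Zt + ψsp - xtilpsi t (z t)) - (Zt + ψsq - q (z t))
            - (ψxt + ψsp - xtilpsi t (xt t)) + (ψxt + ψsq - q (xt t))
          = (η t * θ t) * (xstar t (xt t) - xstar t (z t)) := by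
        rw [happ (z t), happ (xt t)]
        ring
      have hreal : fx - fz ≤ 1 / (η t * θ t) * ((Zt + ψsp - xtilpsi t (z t))
            - (Zt + ψsq - q (z t)))
          + 1 / (η t * θ t) * (ψxt + ψsq - q (xt t))
          + (-(1 / (η t * θ t) * (ψxt + ψsp - xtilpsi t (xt t)))) := by
        have h5 : 1 / (η t * θ t) * ((Zt + ψsp - xtilpsi t (z t)) - (Zt + ψsq - q (z t)))
            + 1 / (η t * θ t) * (ψxt + ψsq - q (xt t))
            + (-(1 / (η t * θ t) * (ψxt + ψsp - xtilpsi t (xt t))))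
            = xstar t (xt t) - xstar t (z t) := by
          have h6 : 1 / (η t * θ t) * ((Zt + ψsp - xtilpsi t (z t)) - (Zt + ψsq - q (z t)))
              + 1 / (η t * θ t) * (ψxt + ψsq - q (xt t))
              + (-(1 / (η t * θ t) * (ψxt + ψsp - xtilpsi t (xt t))))
              = 1 / (η t * θ t) * ((Zt + ψsp - xtilpsi t (z t)) - (Zt + ψsq - q (z t))
                - (ψxt + ψsp - xtilpsi t (xt t)) + (ψxt + ψsq - q (xt t))) := by ring
          rw [h6, hfour]
          field_simp
        linarith
      calc ((fx - fz : ℝ) : EReal)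
          ≤ ((1 / (η t * θ t) * ((Zt + ψsp - xtilpsi t (z t)) - (Zt + ψsq - q (z t))) : ℝ) : EReal)
            + ((1 / (η t * θ t) : ℝ) : EReal) * ((ψxt + ψsq - q (xt t) : ℝ) : EReal)
            + ((-(1 / (η t * θ t) * (ψxt + ψsp - xtilpsi t (xt t))) : ℝ) : EReal) := by
            rw [← EReal.coe_mul, ← EReal.coe_add, ← EReal.coe_add]
            exact_mod_cast hreal
        _ ≤ _ := by
            refine add_le_add (add_le_add le_rfl ?_) le_rfl
            exact mul_le_mul_of_nonneg_left hBxqE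
              (by exact_mod_cast (by positivity : (0:ℝ) ≤ 1 / (η t * θ t)))
  choose! A B C hA hB hC hABC using key
  calc ∑ t ∈ Icc 1 T, (f t (xt t) - f t (z t))
      = ∑ t ∈ Icc 1 T, ((A t : ℝ) : EReal) := Finset.sum_congr rfl hA
    _ ≤ ∑ t ∈ Icc 1 T, (((1 / (η t * θ t) * B t : ℝ) : EReal)
          + ((1 / (η t * θ t) : ℝ) : EReal) * phiConj Φ (η t * θ t * ‖xstar t - xhat t‖)
          + ((-(1 / (η t * θ t) * C t) : ℝ) : EReal)) := Finset.sum_le_sum hABC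
    _ = (∑ t ∈ Icc 1 T, ((1 / (η t * θ t) * B t : ℝ) : EReal))
          + (∑ t ∈ Icc 1 T, ((1 / (η t * θ t) : ℝ) : EReal)
              * phiConj Φ (η t * θ t * ‖xstar t - xhat t‖))
          + ∑ t ∈ Icc 1 T, ((-(1 / (η t * θ t) * C t) : ℝ) : EReal) := by
        rw [Finset.sum_add_distrib, Finset.sum_add_distrib]
    _ = _ := by
        rw [ereal_coe_sum, ereal_coe_sum]
        have e1 : ∑ t ∈ Icc 1 T, ((1 / (η t * θ t) : ℝ) : EReal) *
            (breg ψ (z t) (xtilpsi t) -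
              breg ψ (z t) (apsi + (η t / η (t + 1)) • (xtilpsi (t + 1) - apsi)))
            = ((∑ t ∈ Icc 1 T, 1 / (η t * θ t) * B t : ℝ) : EReal) := by
          rw [← ereal_coe_sum]
          refine Finset.sum_congr rfl fun t ht => ?_
          rw [hB t ht, ← EReal.coe_mul]
        have e3 : ∑ t ∈ Icc 1 T, ((1 / (η t * θ t) : ℝ) : EReal) *
            breg ψ (xt t) (xtilpsi t)
            = ((∑ t ∈ Icc 1 T, 1 / (η t * θ t) * C t : ℝ) : EReal) := by
          rw [← ereal_coe_sum]
          refine Finset.sum_congr rfl fun t ht => ?_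
          rw [hC t ht, ← EReal.coe_mul]
        rw [e1, e3, sub_eq_add_neg]
        have e4 : ((∑ t ∈ Icc 1 T, -(1 / (η t * θ t) * C t) : ℝ) : EReal)
            = -(((∑ t ∈ Icc 1 T, 1 / (η t * θ t) * C t : ℝ) : EReal)) := by
          rw [← EReal.coe_neg, Finset.sum_neg_distrib]
        rw [e4]
end

section
/- Stability of minimizers of φ-convex functions under linear perturbations: Let E be a real normed vector space, φ: [0,∞) → [0,+∞] convex with φ(0) = 0, and let g: E → ℝ ∪ {+∞} be proper and φ-convex. If u*, v* ∈ E* and x, y ∈ E satisfy −u* ∈ ∂g(x) and −v* ∈ ∂g(y) (equivalently, x minimizes g + ⟨u*,·⟩ and y minimizes g + ⟨v*,·⟩), then φ(‖x − y‖) ≤ φ*(‖u* − v*‖), where φ*(s) = sup_{r≥0}(sr − φ(r)). -/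
private lemma sum_eq_zero_aux {A B : EReal} {c : ℝ} (hA : A ≠ ⊥) (hB : B ≠ ⊥)
    (h : A + B - (c : EReal) = 0) :
    ∃ a b : ℝ, A = (a : EReal) ∧ B = (b : EReal) ∧ a + b - c = 0 := by
  have hAt : A ≠ ⊤ := by
    intro hAtop
    rw [hAtop, EReal.top_add_of_ne_bot hB] at h
    simp [EReal.top_sub_coe] at h
  have hBt : B ≠ ⊤ := by
    intro hBtop
    rw [hBtop, EReal.add_top_of_ne_bot hA] at h
    simp [EReal.top_sub_coe] at h
  refine ⟨A.toReal, B.toReal, (EReal.coe_toReal hAt hA).symm,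
    (EReal.coe_toReal hBt hB).symm, ?_⟩
  rw [← EReal.coe_toReal hAt hA, ← EReal.coe_toReal hBt hB,
    ← EReal.coe_add, ← EReal.coe_sub] at h
  exact_mod_cast h

/-- **Stability of minimizers of `Φ`-convex functions under linear perturbations.**
If `−u* ∈ ∂g(x)` and `−v* ∈ ∂g(y)`, then `Φ(‖x − y‖) ≤ Φ*(‖u* − v*‖)`. -/
theorem stability_of_minimizers_phi_convex
    {E : Type*} [NormedAddCommGroup E] [NormedSpace ℝ E]
    (Φ : ℝ → EReal)
    (hΦconv : ∀ a b s t : ℝ, 0 ≤ a → 0 ≤ b → a + b = 1 → 0 ≤ s → 0 ≤ t →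
      Φ (a * s + b * t) ≤ (a : EReal) * Φ s + (b : EReal) * Φ t)
    (hΦ0 : Φ 0 = 0) (hΦnn : ∀ s : ℝ, 0 ≤ s → 0 ≤ Φ s)
    (g : E → EReal) (hbot : ∀ x, g x ≠ ⊥) (hproper : ∃ x, g x ≠ ⊤)
    (hg : ∀ (x y : E) (p : E →L[ℝ] ℝ), p ∈ subdiff g y → Φ ‖x - y‖ ≤ breg g x p)
    (ustar vstar : E →L[ℝ] ℝ) (x y : E)
    (hx : -ustar ∈ subdiff g x) (hy : -vstar ∈ subdiff g y) :
    Φ ‖x - y‖ ≤ phiConj Φ ‖ustar - vstar‖ := by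
  classical
  obtain ⟨z, hz⟩ := hproper
  -- fconj is never ⊥
  have hfb : ∀ p : E →L[ℝ] ℝ, fconj g p ≠ ⊥ := by
    intro p hpbot
    have h1 : ((p z : ℝ) : EReal) - g z ≤ fconj g p := le_iSup (fun w => ((p w : ℝ) : EReal) - g w) z
    rw [hpbot, le_bot_iff] at h1
    rw [← EReal.coe_toReal hz (hbot z), ← EReal.coe_sub] at h1
    exact EReal.coe_ne_bot _ h1
  have hxeq : breg g x (-ustar) = 0 := hx
  have hyeq : breg g y (-vstar) = 0 := hy
  unfold breg at hxeq hyeq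
  obtain ⟨ax, bu, hax, hbu, heqx⟩ := sum_eq_zero_aux (hbot x) (hfb (-ustar)) hxeq
  obtain ⟨ay, bv, hay, hbv, heqy⟩ := sum_eq_zero_aux (hbot y) (hfb (-vstar)) hyeq
  simp only [ContinuousLinearMap.neg_apply] at heqx heqy
  set r : ℝ := ‖x - y‖ with hr
  set s : ℝ := ‖ustar - vstar‖ with hs
  -- the two Bregman bounds
  have h1 : Φ r ≤ ((ax + bv + vstar x : ℝ) : EReal) := by
    have := hg x y (-vstar) hy
    rw [hr]
    refine this.trans_eq ?_
    unfold breg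
    rw [hax, hbv, ContinuousLinearMap.neg_apply, ← EReal.coe_add, ← EReal.coe_sub]
    norm_cast
    ring
  have h2 : Φ r ≤ ((ay + bu + ustar y : ℝ) : EReal) := by
    have := hg y x (-ustar) hx
    rw [norm_sub_rev] at this
    rw [hr]
    refine this.trans_eq ?_
    unfold breg
    rw [hay, hbu, ContinuousLinearMap.neg_apply, ← EReal.coe_add, ← EReal.coe_sub]
    norm_cast
    ring
  -- sum bound
  have hsum : (ax + bv + vstar x) + (ay + bu + ustar y) ≤ s * r := by
    have hkey : (ax + bv + vstar x) + (ay + bu + ustar y)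
        = (ustar - vstar) (y - x) := by
      simp only [ContinuousLinearMap.sub_apply, map_sub]
      linarith
    rw [hkey, hs, hr, norm_sub_rev x y]
    calc (ustar - vstar) (y - x) ≤ ‖(ustar - vstar) (y - x)‖ := le_abs_self _
      _ ≤ ‖ustar - vstar‖ * ‖y - x‖ := (ustar - vstar).le_opNorm _
  -- Φ r is a nonneg real
  have hrnn : (0 : ℝ) ≤ r := norm_nonneg _
  have hΦrnn : (0 : EReal) ≤ Φ r := hΦnn r hrnn
  have hΦrnt : Φ r ≠ ⊤ := by
    intro htop
    rw [htop, top_le_iff] at h1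
    exact EReal.coe_ne_top _ h1
  have hΦrnb : Φ r ≠ ⊥ := by
    intro hb
    rw [hb] at hΦrnn
    simp at hΦrnn
  set c : ℝ := (Φ r).toReal with hc
  have hΦr : Φ r = (c : EReal) := (EReal.coe_toReal hΦrnt hΦrnb).symm
  have hcnn : 0 ≤ c := by
    rw [hΦr] at hΦrnn; exact_mod_cast hΦrnn
  have h2c : c + c ≤ s * r := by
    have hadd : Φ r + Φ r ≤ ((ax + bv + vstar x : ℝ) : EReal) + ((ay + bu + ustar y : ℝ) : EReal) :=
      add_le_add h1 h2
    rw [hΦr, ← EReal.coe_add, ← EReal.coe_add] at hadd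
    have : c + c ≤ (ax + bv + vstar x) + (ay + bu + ustar y) := by exact_mod_cast hadd
    linarith
  -- conclude via the sup
  have hterm : ((s * r : ℝ) : EReal) - Φ r ≤ phiConj Φ s :=
    le_iSup (fun q : {q : ℝ // 0 ≤ q} => ((s * q.1 : ℝ) : EReal) - Φ q.1) ⟨r, hrnn⟩
  refine le_trans ?_ hterm
  rw [hΦr, ← EReal.coe_sub]
  exact_mod_cast (by linarith : c ≤ s * r - c)
end

section
/- Infimum identity for the conjugate truncated quadratic: For every ρ ∈ (0, +∞] and all real numbers a, b ≥ 0, one has inf_{γ>0} (1/γ)(Q_ρ*(γa) + Q_ρ*(b)) = a · min{b, ρ}, where Q_ρ*(κ) = κ²/2 − (|κ| − ρ)₊²/2 and t₊ = max{t, 0} (for ρ = +∞ read Q_∞*(κ) = κ²/2). -/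
/-!
Fenchel–Young, `Q_ρ*(κ) ≥ κ m - m² / 2` for `m = min b ρ`, bounds every term of the infimum below
by `a m + m (b - m) / γ ≥ a m`. For the reverse inequality: if `b ≤ ρ` then `Q_ρ* ≤ κ² / 2` bounds
the terms by `(γ a² + b² / γ) / 2`, whose infimum is `a b`; if `ρ < b` then `Q_ρ*(κ) ≤ ρ |κ|` bounds
them by `a ρ + Q_ρ*(b) / γ`, which tends to `a ρ` as `γ → ∞`.
-/

open scoped ENNReal

/-- `Q_ρ*(κ) = κ²/2 − (|κ| − ρ)₊²/2` for `ρ ∈ (0, +∞]` (with `(|κ| − ∞)₊ = 0`). -/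
noncomputable def Qstar (ρ : ℝ≥0∞) (κ : ℝ) : ℝ :=
  κ ^ 2 / 2 - ((ENNReal.ofReal |κ| - ρ).toReal) ^ 2 / 2

open Filter

lemma Qstar_top (κ : ℝ) : Qstar ∞ κ = κ ^ 2 / 2 := by
  simp [Qstar]

lemma Qstar_ofReal {r : ℝ} (hr : 0 ≤ r) (κ : ℝ) :
    Qstar (ENNReal.ofReal r) κ = κ ^ 2 / 2 - max (|κ| - r) 0 ^ 2 / 2 := by
  rw [Qstar, ← ENNReal.ofReal_sub _ hr, ENNReal.toReal_ofReal']

lemma Qstar_le_sq_div_two (ρ : ℝ≥0∞) (κ : ℝ) : Qstar ρ κ ≤ κ ^ 2 / 2 := by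
  unfold Qstar
  linarith [sq_nonneg (ENNReal.ofReal |κ| - ρ).toReal]

lemma Qstar_ofReal_le_mul_abs {r : ℝ} (hr : 0 ≤ r) (κ : ℝ) :
    Qstar (ENNReal.ofReal r) κ ≤ r * |κ| := by
  rw [Qstar_ofReal hr, ← sq_abs κ]
  rcases le_total (|κ| - r) 0 with h | h
  · rw [max_eq_right h]; nlinarith [abs_nonneg κ]
  · rw [max_eq_left h]; nlinarith

lemma mul_sub_sq_div_two_le_Qstar {ρ : ℝ≥0∞} {m : ℝ} (hm : 0 ≤ m) (hmρ : ENNReal.ofReal m ≤ ρ)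
    (κ : ℝ) : κ * m - m ^ 2 / 2 ≤ Qstar ρ κ := by
  rcases eq_top_or_lt_top ρ with rfl | hρ
  · rw [Qstar_top]; nlinarith [sq_nonneg (κ - m)]
  obtain ⟨r, hr, rfl⟩ : ∃ r, 0 ≤ r ∧ ρ = ENNReal.ofReal r :=
    ⟨ρ.toReal, ENNReal.toReal_nonneg, (ENNReal.ofReal_toReal hρ.ne).symm⟩
  have hmr : m ≤ r := (ENNReal.ofReal_le_ofReal_iff hr).1 hmρ
  rw [Qstar_ofReal hr]
  have hκ := le_abs_self κ
  rcases le_total (|κ| - r) 0 with h | h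
  · rw [max_eq_right h]; nlinarith [sq_nonneg (κ - m)]
  · rw [max_eq_left h, ← sq_abs κ]; nlinarith

lemma mul_le_inv_mul_Qstar_add {ρ : ℝ≥0∞} {a b m γ : ℝ} (hm : 0 ≤ m) (hmb : m ≤ b)
    (hmρ : ENNReal.ofReal m ≤ ρ) (hγ : 0 < γ) :
    a * m ≤ 1 / γ * (Qstar ρ (γ * a) + Qstar ρ b) := by
  have hγa := mul_sub_sq_div_two_le_Qstar hm hmρ (γ * a)
  have hb := mul_sub_sq_div_two_le_Qstar hm hmρ b
  rw [one_div, inv_mul_eq_div, le_div_iff₀ hγ]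
  nlinarith [mul_nonneg hm (sub_nonneg.2 hmb)]

lemma inv_mul_Qstar_add_le_sq (ρ : ℝ≥0∞) {γ : ℝ} (hγ : 0 < γ) (a b : ℝ) :
    1 / γ * (Qstar ρ (γ * a) + Qstar ρ b) ≤ (γ * a ^ 2 + b ^ 2 / γ) / 2 := by
  have h := add_le_add (Qstar_le_sq_div_two ρ (γ * a)) (Qstar_le_sq_div_two ρ b)
  calc 1 / γ * (Qstar ρ (γ * a) + Qstar ρ b)
      ≤ 1 / γ * ((γ * a) ^ 2 / 2 + b ^ 2 / 2) := by gcongr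
    _ = (γ * a ^ 2 + b ^ 2 / γ) / 2 := by field_simp

lemma inv_mul_Qstar_ofReal_add_le {r γ : ℝ} (hr : 0 ≤ r) (hγ : 0 < γ) {a : ℝ} (ha : 0 ≤ a)
    (b : ℝ) :
    1 / γ * (Qstar (ENNReal.ofReal r) (γ * a) + Qstar (ENNReal.ofReal r) b)
      ≤ a * r + Qstar (ENNReal.ofReal r) b / γ := by
  have h := Qstar_ofReal_le_mul_abs hr (γ * a)
  rw [abs_of_nonneg (by positivity)] at h
  calc 1 / γ * (Qstar (ENNReal.ofReal r) (γ * a) + Qstar (ENNReal.ofReal r) b)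
      ≤ 1 / γ * (r * (γ * a) + Qstar (ENNReal.ofReal r) b) := by gcongr
    _ = a * r + Qstar (ENNReal.ofReal r) b / γ := by field_simp

-- `γ = (b + δ) / (a + δ)` approximates the minimiser `b / a` of `γ a² + b² / γ`, also when `a` or
-- `b` vanishes.
lemma exists_pos_mul_sq_add_sq_div_lt {a b w : ℝ} (ha : 0 ≤ a) (hb : 0 ≤ b) (hw : a * b < w) :
    ∃ γ > 0, (γ * a ^ 2 + b ^ 2 / γ) / 2 < w := by
  set δ := (w - a * b) / (a + b + 1)
  have hδ : 0 < δ := div_pos (by linarith) (by linarith)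
  have hδab : δ * (a + b + 1) = w - a * b := div_mul_cancel₀ _ (by linarith)
  refine ⟨(b + δ) / (a + δ), by positivity, ?_⟩
  have h1 : (b + δ) / (a + δ) * a ^ 2 ≤ (b + δ) * a := by
    rw [div_mul_eq_mul_div, div_le_iff₀ (by positivity)]
    nlinarith [mul_nonneg (mul_nonneg ha (by positivity : (0:ℝ) ≤ b + δ)) hδ.le]
  have h2 : b ^ 2 / ((b + δ) / (a + δ)) ≤ b * (a + δ) := by
    rw [div_div_eq_mul_div, div_le_iff₀ (by positivity)]
    nlinarith [mul_nonneg (mul_nonneg hb (by positivity : (0:ℝ) ≤ a + δ)) hδ.le]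
  nlinarith

theorem inf_identity_conjugate_truncated_quadratic_general
    (ρ : ℝ≥0∞) (a b : ℝ) (ha : 0 ≤ a) (hb : 0 ≤ b) :
    (⨅ γ : {γ : ℝ // 0 < γ}, (1 / γ.1) * (Qstar ρ (γ.1 * a) + Qstar ρ b))
      = a * (min (ENNReal.ofReal b) ρ).toReal := by
  have : Nonempty {γ : ℝ // 0 < γ} := ⟨⟨1, one_pos⟩⟩
  set m := (min (ENNReal.ofReal b) ρ).toReal
  have hmρ : ENNReal.ofReal m ≤ ρ := ENNReal.ofReal_toReal_le.trans (min_le_right _ _)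
  have hmb : m ≤ b := ENNReal.toReal_le_of_le_ofReal hb (min_le_left _ _)
  refine ciInf_eq_of_forall_ge_of_forall_gt_exists_lt
    (fun γ ↦ mul_le_inv_mul_Qstar_add ENNReal.toReal_nonneg hmb hmρ γ.2) fun w hw ↦ ?_
  rcases le_or_gt (ENNReal.ofReal b) ρ with hbρ | hρb
  · rw [show m = b by simp [m, hbρ, hb]] at hw
    obtain ⟨γ, hγ, hlt⟩ := exists_pos_mul_sq_add_sq_div_lt ha hb hw
    exact ⟨⟨γ, hγ⟩, (inv_mul_Qstar_add_le_sq ρ hγ a b).trans_lt hlt⟩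
  · obtain ⟨r, hr, rfl⟩ : ∃ r, 0 ≤ r ∧ ρ = ENNReal.ofReal r :=
      ⟨ρ.toReal, ENNReal.toReal_nonneg, (ENNReal.ofReal_toReal hρb.ne_top).symm⟩
    rw [show m = r by simp [m, hρb.le, hr]] at hw
    have hlim : Tendsto (fun γ ↦ Qstar (ENNReal.ofReal r) b / γ) atTop (nhds 0) :=
      tendsto_const_nhds.div_atTop tendsto_id
    obtain ⟨γ, hsmall, hγ⟩ :=
      ((hlim.eventually (gt_mem_nhds (sub_pos.2 hw))).and (eventually_gt_atTop 0)).exists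
    exact ⟨⟨γ, hγ⟩, (inv_mul_Qstar_ofReal_add_le hr hγ ha b).trans_lt (by linarith)⟩

/-- **Infimum identity for the conjugate truncated quadratic.** For every `ρ ∈ (0, +∞]`
and all reals `a, b ≥ 0`, `inf_{γ > 0} (1/γ)(Q_ρ*(γa) + Q_ρ*(b)) = a · min{b, ρ}`. -/
theorem inf_identity_conjugate_truncated_quadratic
    (ρ : ℝ≥0∞) (hρ : 0 < ρ) (a b : ℝ) (ha : 0 ≤ a) (hb : 0 ≤ b) :
    (⨅ γ : {γ : ℝ // 0 < γ}, (1 / γ.1) * (Qstar ρ (γ.1 * a) + Qstar ρ b))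
      = a * (min (ENNReal.ofReal b) ρ).toReal :=
  inf_identity_conjugate_truncated_quadratic_general ρ a b ha hb
end
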